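/- arXiv:2412.00779 — 2 statements merged into one kernel-verified Lean document; each statement's English description precedes it below -/
import Mathlib

section
/- Let $\gamma\in(0,1)$, $T\in(-\infty,\infty]$, $p\in(1,\infty)$, $\omega\in A_p(\mathbb{R})$ with $[\omega]_{A_p}\leq K_0$, and let $E\subset F\subset(-\infty,T)$ be measurable with $|E|<\infty$. Suppose for every $t\leq T$ and $R>0$: if $|\mathcal{C}_R(t)\cap E| \geq \gamma|\mathcal{C}_R(t)|$ then $\mathcal{C}_R(t)\cap\{s\leq T\}\subset F$. Then $\omega(E) \leq N\gamma^\delta\,\omega(F)$, where $N>0$ and $\delta\in(0,1)$ depend only on $K_0$. -/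
/-!
Jensen's inequality turns the `A_p` bound into Hruščëv's condition
`⨍_I ω ≤ K exp (⨍_I log ω)` with `K = max K₀ 1`, whatever `p` is. Chebyshev's inequality for
`log ω` then shows that `ω ≥ exp (-λ) ⨍_I ω` outside a subset of `I` of measure
`O(|I| / λ)`, so every subset of `I` of proportional measure carries a proportional part of
`ω(I)`. This gives `ω(S) ≤ β ω(I)` whenever `|S| ≤ |I| / 2`, for some `β < 1`, as well as the
doubling property. Iterating the former along Calderón–Zygmund decompositions yields
`ω(S) ≤ β⁻¹ (|S| / |I|)^δ ω(I)` with `δ = log β / log (1 / 4)`.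

Almost every `y ∈ E` has a stopping radius `R`: `E` has density at least `γ` in
`[y - R, y + R]` but less than `γ` in `[y - 4R, y + 4R]`. By the hypothesis, the first property
puts `(y - R, y)` inside `F`. By the second, the weight of `E ∩ [y - 4R, y + 4R]` is at most
`β⁻¹ γ^δ` times that of the interval, hence, by doubling, at most a constant times
`γ^δ ω((y - R, y))`. Summing over a Vitali subfamily of these balls with disjoint `R`-balls
gives the result.
-/

open MeasureTheory Set Filter Topology Real
open scoped ENNReal

namespace InkSpots

/-! ### Dyadic intervals and the Calderón–Zygmund decomposition -/

noncomputable def gridIco (a h x : ℝ) : Set ℝ :=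
  Ico (a + h * ⌊(x - a) / h⌋) (a + h * (⌊(x - a) / h⌋ + 1))

section gridIco

variable {a h x y : ℝ}

theorem mem_gridIco (hh : 0 < h) : x ∈ gridIco a h x := by
  have h1 := Int.floor_le ((x - a) / h)
  have h2 := Int.lt_floor_add_one ((x - a) / h)
  rw [le_div_iff₀ hh] at h1
  rw [div_lt_iff₀ hh] at h2
  constructor <;> linarith

theorem gridIco_eq_of_mem (hh : 0 < h) (hy : y ∈ gridIco a h x) :
    gridIco a h y = gridIco a h x := by
  have : ⌊(y - a) / h⌋ = ⌊(x - a) / h⌋ := by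
    rw [Int.floor_eq_iff, le_div_iff₀ hh, div_lt_iff₀ hh]
    constructor <;> linarith [hy.1, hy.2]
  rw [gridIco, gridIco, this]

theorem gridIco_half_subset (hh : 0 < h) : gridIco a (h / 2) x ⊆ gridIco a h x := by
  set u := (x - a) / h
  have hu : (x - a) / (h / 2) = 2 * u := by simp only [u]; field_simp
  have hlow : (2 * ⌊u⌋ : ℤ) ≤ ⌊2 * u⌋ := Int.le_floor.2 (by push_cast; linarith [Int.floor_le u])
  have hupp : ⌊2 * u⌋ < 2 * ⌊u⌋ + 2 :=
    Int.floor_lt.2 (by push_cast; linarith [Int.lt_floor_add_one u])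
  have hlow' : (2 * ⌊u⌋ : ℝ) ≤ ⌊2 * u⌋ := by exact_mod_cast hlow
  have hupp' : (⌊2 * u⌋ : ℝ) + 1 ≤ 2 * ⌊u⌋ + 2 := by exact_mod_cast hupp
  rw [gridIco, gridIco, hu]
  apply Ico_subset_Ico <;> nlinarith

theorem volume_gridIco : volume (gridIco a h x) = ENNReal.ofReal h := by
  rw [gridIco, Real.volume_Ico]; ring_nf

theorem gridIco_subset_closedBall (hh : 0 < h) : gridIco a h x ⊆ Metric.closedBall x h := by
  intro y hy
  have hx := mem_gridIco (a := a) hh (x := x)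
  rw [Metric.mem_closedBall, Real.dist_eq, abs_le]
  constructor <;> linarith [hy.1, hy.2, hx.1, hx.2]

end gridIco

noncomputable def dyadicIco (a b : ℝ) (n : ℕ) (x : ℝ) : Set ℝ := gridIco a ((b - a) / 2 ^ n) x

section dyadicIco

variable {a b x y : ℝ}

theorem mem_dyadicIco (hab : a < b) (n : ℕ) : x ∈ dyadicIco a b n x :=
  mem_gridIco (div_pos (sub_pos.2 hab) (by positivity))

theorem dyadicIco_eq_of_mem (hab : a < b) {n : ℕ} (hy : y ∈ dyadicIco a b n x) :
    dyadicIco a b n y = dyadicIco a b n x :=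
  gridIco_eq_of_mem (div_pos (sub_pos.2 hab) (by positivity)) hy

theorem exists_dyadicIco_eq_Ico (hab : a < b) (n : ℕ) (x : ℝ) :
    ∃ u v, u < v ∧ dyadicIco a b n x = Ico u v := by
  have : 0 < (b - a) / 2 ^ n := div_pos (sub_pos.2 hab) (by positivity)
  exact ⟨_, _, by linarith, rfl⟩

theorem dyadicIco_antitone (hab : a < b) (x : ℝ) : Antitone fun n => dyadicIco a b n x := by
  refine antitone_nat_of_succ_le fun n => ?_
  have := gridIco_half_subset (a := a) (x := x) (div_pos (sub_pos.2 hab) (pow_pos two_pos n))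
  rwa [div_div, ← pow_succ] at this

theorem dyadicIco_zero (hx : x ∈ Ico a b) : dyadicIco a b 0 x = Ico a b := by
  have hab : 0 < b - a := by linarith [hx.1, hx.2]
  have : ⌊(x - a) / (b - a)⌋ = 0 := by
    rw [Int.floor_eq_iff, le_div_iff₀ hab, div_lt_iff₀ hab, Int.cast_zero]
    constructor <;> linarith [hx.1, hx.2]
  simp only [dyadicIco, gridIco, pow_zero, div_one, this]
  congr 1 <;> push_cast <;> ring

theorem dyadicIco_subset (hx : x ∈ Ico a b) (n : ℕ) : dyadicIco a b n x ⊆ Ico a b :=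
  dyadicIco_zero hx ▸ dyadicIco_antitone (by linarith [hx.1, hx.2]) x (Nat.zero_le n)

theorem volume_dyadicIco (n : ℕ) :
    volume (dyadicIco a b n x) = ENNReal.ofReal ((b - a) / 2 ^ n) :=
  volume_gridIco

theorem volume_dyadicIco_succ (n : ℕ) :
    volume (dyadicIco a b n x) = 2 * volume (dyadicIco a b (n + 1) x) := by
  rw [volume_dyadicIco, volume_dyadicIco, ← ENNReal.ofReal_ofNat 2,
    ← ENNReal.ofReal_mul (by norm_num), pow_succ]
  congr 1
  field_simp

theorem volume_inter_dyadicIco_succ_le (hab : a < b) {S : Set ℝ} {t : ℝ≥0∞} {n : ℕ}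
    (hn : volume (S ∩ dyadicIco a b n x) ≤ t * volume (dyadicIco a b n x)) :
    volume (S ∩ dyadicIco a b (n + 1) x) ≤ 2 * t * volume (dyadicIco a b (n + 1) x) :=
  calc volume (S ∩ dyadicIco a b (n + 1) x) ≤ volume (S ∩ dyadicIco a b n x) :=
        measure_mono (inter_subset_inter_right _ (dyadicIco_antitone hab x n.le_succ))
    _ ≤ t * volume (dyadicIco a b n x) := hn
    _ = 2 * t * volume (dyadicIco a b (n + 1) x) := by
        rw [volume_dyadicIco_succ, mul_left_comm, mul_assoc]

theorem dyadicIco_eq_of_not_disjoint (hab : a < b) {m n : ℕ} (hmn : m ≤ n)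
    (hxy : ¬Disjoint (dyadicIco a b n x) (dyadicIco a b m y)) :
    dyadicIco a b m x = dyadicIco a b m y := by
  obtain ⟨z, hzx, hzy⟩ := not_disjoint_iff.1 hxy
  rw [← dyadicIco_eq_of_mem hab hzy, dyadicIco_eq_of_mem hab (dyadicIco_antitone hab x hmn hzx)]

theorem pairwiseDisjoint_minimal_dyadicIco (hab : a < b) (P : Set ℝ → Prop) :
    {J | ∃ x n, P (dyadicIco a b n x) ∧ (∀ m < n, ¬P (dyadicIco a b m x)) ∧
      J = dyadicIco a b n x}.PairwiseDisjoint id := by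
  have key : ∀ x y n m, P (dyadicIco a b n x) → (∀ k < n, ¬P (dyadicIco a b k x)) →
      P (dyadicIco a b m y) → m ≤ n → ¬Disjoint (dyadicIco a b n x) (dyadicIco a b m y) →
      dyadicIco a b n x = dyadicIco a b m y := by
    intro x y n m _ hxmin hy hmn hxy
    have hDm := dyadicIco_eq_of_not_disjoint hab hmn hxy
    obtain rfl : m = n := hmn.eq_of_not_lt fun hlt => hxmin m hlt (hDm ▸ hy)
    exact hDm
  rintro _ ⟨x, n, hx, hxmin, rfl⟩ _ ⟨y, m, hy, hymin, rfl⟩ hne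
  by_contra hxy
  rcases le_total m n with hmn | hnm
  · exact hne (key x y n m hx hxmin hy hmn hxy)
  · exact hne (key y x m n hy hymin hx hnm fun h => hxy h.symm).symm

end dyadicIco

theorem ae_eventually_lt_volume_inter_closedBall (S : Set ℝ) :
    ∀ᵐ x ∂volume.restrict S, ∀ c < (1 : ℝ≥0∞), ∀ᶠ r in 𝓝[>] (0 : ℝ),
      c * volume (Metric.closedBall x r) < volume (S ∩ Metric.closedBall x r) := by
  filter_upwards [Besicovitch.ae_tendsto_measure_inter_div volume S] with x hx c hc
  filter_upwards [hx.eventually (lt_mem_nhds hc), self_mem_nhdsWithin] with r hr (hr0 : 0 < r)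
  rwa [ENNReal.lt_div_iff_mul_lt (Or.inl (by simp [hr0])) (Or.inl measure_closedBall_lt_top.ne)]
    at hr

theorem tendsto_div_two_pow_nhdsGT_zero {c : ℝ} (hc : 0 < c) :
    Tendsto (fun n : ℕ => c / 2 ^ n) atTop (𝓝[>] 0) := by
  refine tendsto_nhdsWithin_iff.2 ⟨?_, .of_forall fun n => div_pos hc (by positivity)⟩
  simpa [div_eq_mul_inv] using
    (tendsto_pow_atTop_nhds_zero_of_lt_one (r := (2 : ℝ)⁻¹) (by norm_num) (by norm_num)).const_mul c

/-- The ball of radius `(b - a) / 2 ^ n` around `x` contains the dyadic interval and is twice as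
long, so a density above `(1 + t) / 2` in the ball forces a density above `t` in the interval. -/
theorem exists_lt_volume_inter_dyadicIco {a b x : ℝ} (hab : a < b) {S : Set ℝ} {t : ℝ≥0∞}
    (ht : t < 1)
    (hx : ∀ c < (1 : ℝ≥0∞), ∀ᶠ r in 𝓝[>] (0 : ℝ),
      c * volume (Metric.closedBall x r) < volume (S ∩ Metric.closedBall x r)) :
    ∃ n, t * volume (dyadicIco a b n x) < volume (S ∩ dyadicIco a b n x) := by
  have hc : (1 + t) / 2 < 1 := by
    rw [ENNReal.div_lt_iff (Or.inl two_ne_zero) (Or.inl ENNReal.ofNat_ne_top), one_mul]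
    simpa [one_add_one_eq_two] using ENNReal.add_lt_add_left ENNReal.one_ne_top ht
  obtain ⟨n, hn⟩ :=
    ((tendsto_div_two_pow_nhdsGT_zero (sub_pos.2 hab)).eventually (hx _ hc)).exists
  refine ⟨n, ?_⟩
  set D := dyadicIco a b n x
  set B := Metric.closedBall x ((b - a) / 2 ^ n)
  set ρ := volume D
  have hρ : ρ ≠ ⊤ := by simp [ρ, D, volume_dyadicIco]
  have hDB : D ⊆ B := gridIco_subset_closedBall (div_pos (sub_pos.2 hab) (by positivity))
  have hB : volume B = 2 * ρ := by
    simp only [B, ρ, D]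
    rw [Real.volume_closedBall, volume_dyadicIco (x := x), ENNReal.ofReal_mul zero_le_two,
      ENNReal.ofReal_ofNat]
  have hBD : volume (B \ D) = ρ := by
    rw [measure_sdiff hDB measurableSet_Ico.nullMeasurableSet hρ, hB, two_mul,
      ENNReal.add_sub_cancel_right hρ]
  have hsplit : volume (S ∩ B) ≤ volume (S ∩ D) + ρ :=
    hBD ▸ (measure_mono fun y (hy : y ∈ S ∩ B) => by
      by_cases hyD : y ∈ D
      exacts [Or.inl ⟨hy.1, hyD⟩, Or.inr ⟨hy.2, hyD⟩]).trans (measure_union_le _ _)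
  have hcB : (1 + t) / 2 * volume B = t * ρ + ρ := by
    rw [hB, ← mul_assoc, ENNReal.div_mul_cancel two_ne_zero ENNReal.ofNat_ne_top, add_mul,
      one_mul, add_comm]
  rw [← ENNReal.add_lt_add_iff_right hρ]
  exact hcB ▸ hn.trans_le hsplit

/-- The family consists of the maximal dyadic subintervals of `[a, b)` in which `S` has density
above `t`. -/
theorem exists_calderonZygmund {a b : ℝ} (hab : a < b) {S : Set ℝ} (hSm : MeasurableSet S)
    (hS : S ⊆ Ico a b) {t : ℝ≥0∞} (ht : t < 1) (hSt : volume S ≤ t * volume (Ico a b)) :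
    ∃ 𝒥 : Set (Set ℝ), 𝒥.Countable ∧ 𝒥.PairwiseDisjoint id ∧
      (∀ J ∈ 𝒥, (∃ u v, u < v ∧ J = Ico u v) ∧ J ⊆ Ico a b ∧
        t * volume J < volume (S ∩ J) ∧ volume (S ∩ J) ≤ 2 * t * volume J) ∧
      volume (S \ ⋃₀ 𝒥) = 0 := by
  classical
  set D := dyadicIco a b
  set heavy : Set ℝ → Prop := fun J => t * volume J < volume (S ∩ J)
  set 𝒥 : Set (Set ℝ) :=
    {J | ∃ x ∈ S, ∃ n, heavy (D n x) ∧ (∀ m < n, ¬heavy (D m x)) ∧ J = D n x}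
  have hdisj : 𝒥.PairwiseDisjoint id := (pairwiseDisjoint_minimal_dyadicIco hab heavy).subset
    fun J ⟨x, _, n, hJ⟩ => ⟨x, n, hJ⟩
  have hinterval : ∀ J ∈ 𝒥, ∃ u v, u < v ∧ J = Ico u v := by
    rintro _ ⟨x, -, n, -, -, rfl⟩
    exact exists_dyadicIco_eq_Ico hab n x
  refine ⟨𝒥, hdisj.countable_of_nonempty_interior fun J hJ => ?_, hdisj, fun J hJ => ?_, ?_⟩
  · obtain ⟨u, v, huv, rfl⟩ := hinterval J hJ
    simpa using huv
  · refine ⟨hinterval J hJ, ?_⟩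
    obtain ⟨x, hxS, n, hx, hxmin, rfl⟩ := hJ
    refine ⟨dyadicIco_subset (hS hxS) n, hx, ?_⟩
    obtain ⟨m, rfl⟩ : ∃ m, n = m + 1 := by
      refine Nat.exists_eq_add_one.2 (Nat.pos_of_ne_zero fun hn => ?_)
      have hD0 : D 0 x = Ico a b := dyadicIco_zero (hS hxS)
      simp only [heavy, hn, hD0, inter_eq_self_of_subset_left hS] at hx
      exact hx.not_ge hSt
    exact volume_inter_dyadicIco_succ_le hab (not_lt.1 (hxmin m m.lt_succ_self))
  · have hcover : ∀ᵐ x ∂volume.restrict S, x ∈ ⋃₀ 𝒥 := by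
      filter_upwards [ae_eventually_lt_volume_inter_closedBall S, ae_restrict_mem hSm]
        with x hx hxS
      have hex := exists_lt_volume_inter_dyadicIco hab ht hx
      exact ⟨D (Nat.find hex) x, ⟨x, hxS, _, Nat.find_spec hex, fun m hm => Nat.find_min hex hm,
        rfl⟩, mem_dyadicIco hab _⟩
    rw [ae_iff, Measure.restrict_apply' hSm, inter_comm] at hcover
    exact hcover

theorem mul_measure_sUnion_le {α : Type*} [MeasurableSpace α] {μ : Measure α}
    {𝒥 : Set (Set α)} (hcount : 𝒥.Countable) (hdisj : 𝒥.PairwiseDisjoint id)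
    (hm : ∀ J ∈ 𝒥, MeasurableSet J) {S : Set α} (hSm : MeasurableSet S) {t : ℝ≥0∞}
    (ht : ∀ J ∈ 𝒥, t * μ J ≤ μ (S ∩ J)) :
    t * μ (⋃₀ 𝒥) ≤ μ S :=
  calc t * μ (⋃₀ 𝒥) = ∑' J : 𝒥, t * μ J := by
        rw [measure_sUnion hcount hdisj hm, ENNReal.tsum_mul_left]
    _ ≤ ∑' J : 𝒥, μ (S ∩ J) := ENNReal.tsum_le_tsum fun J => ht J J.2
    _ = μ (S ∩ ⋃₀ 𝒥) := by
        rw [sUnion_eq_biUnion, inter_iUnion₂]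
        exact (measure_biUnion (f := fun J => S ∩ J) hcount
          (hdisj.mono fun J => inter_subset_right) fun J hJ => hSm.inter (hm J hJ)).symm
    _ ≤ μ S := measure_mono inter_subset_left

/-! ### Stopping radii -/

theorem le_of_mul_volume_closedBall_le {E : Set ℝ} (hE : volume E ≠ ⊤) {γ : ℝ} (hγ : 0 < γ)
    {x R : ℝ} (hdense : ENNReal.ofReal γ * volume (Metric.closedBall x R) ≤ volume E) :
    R ≤ volume.real E / (2 * γ) := by
  rw [Real.volume_closedBall, ← ENNReal.ofReal_mul hγ.le,
    ENNReal.ofReal_le_iff_le_toReal hE] at hdense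
  rw [le_div_iff₀ (by positivity)]
  exact (le_of_eq (by ring)).trans hdense

/-- `R` is a radius of density at least `γ` exceeding `1 / τ` times the supremum of all such
radii. -/
theorem exists_stopping_radius {E : Set ℝ} (hE : volume E ≠ ⊤) {γ τ : ℝ} (hγ0 : 0 < γ)
    (hγ1 : γ < 1) (hτ : 1 < τ) {x : ℝ}
    (hx : ∀ c < (1 : ℝ≥0∞), ∀ᶠ r in 𝓝[>] (0 : ℝ),
      c * volume (Metric.closedBall x r) < volume (E ∩ Metric.closedBall x r)) :
    ∃ R > 0, ENNReal.ofReal γ * volume (Metric.closedBall x R) ≤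
        volume (E ∩ Metric.closedBall x R) ∧
      volume (E ∩ Metric.closedBall x (τ * R)) <
        ENNReal.ofReal γ * volume (Metric.closedBall x (τ * R)) := by
  set Γ := {R : ℝ | 0 < R ∧ ENNReal.ofReal γ * volume (Metric.closedBall x R) ≤
    volume (E ∩ Metric.closedBall x R)}
  obtain ⟨R₀, hR₀, hR₀pos⟩ :=
    ((hx _ (ENNReal.ofReal_lt_one.2 hγ1)).and self_mem_nhdsWithin).exists
  have hΓbdd : BddAbove Γ := ⟨volume.real E / (2 * γ), fun R hR =>
    le_of_mul_volume_closedBall_le hE hγ0 (hR.2.trans (measure_mono inter_subset_left))⟩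
  have hR₀Γ : R₀ ∈ Γ := ⟨hR₀pos, hR₀.le⟩
  have hsup : 0 < sSup Γ := hR₀pos.trans_le (le_csSup hΓbdd hR₀Γ)
  obtain ⟨R, hRΓ, hR⟩ := exists_lt_of_lt_csSup ⟨R₀, hR₀Γ⟩ (div_lt_self hsup hτ)
  have hτR : sSup Γ < τ * R := by rwa [div_lt_iff₀' (by linarith)] at hR
  refine ⟨R, hRΓ.1, hRΓ.2, not_le.1 fun hle => ?_⟩
  exact (le_csSup hΓbdd ⟨mul_pos (by linarith) hRΓ.1, hle⟩).not_gt hτR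

theorem exists_countable_pairwiseDisjoint_closedBall_cover {G : Set ℝ} {R : ℝ → ℝ} {M : ℝ}
    (hR0 : ∀ x ∈ G, 0 < R x) (hRM : ∀ x ∈ G, R x ≤ M) :
    ∃ u ⊆ G, u.Countable ∧ u.PairwiseDisjoint (fun y => Metric.closedBall y (R y)) ∧
      G ⊆ ⋃ y ∈ u, Metric.closedBall y (4 * R y) := by
  obtain ⟨u, huG, hudisj, hucov⟩ :=
    Vitali.exists_disjoint_subfamily_covering_enlargement_closedBall G id R M hRM 4 (by norm_num)
  refine ⟨u, huG, hudisj.countable_of_nonempty_interior fun y hy => ?_, hudisj, fun x hx => ?_⟩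
  · rw [id, interior_closedBall _ (hR0 y (huG hy)).ne']
    exact Metric.nonempty_ball.2 (hR0 y (huG hy))
  · obtain ⟨y, hyu, hxy⟩ := hucov x hx
    exact mem_biUnion hyu (hxy (Metric.mem_closedBall_self (hR0 x hx).le))

theorem mul_toReal_volume_Ioo_le {E : Set ℝ} {γ : ℝ} (hγ : 0 ≤ γ) {y R : ℝ}
    (hdense : ENNReal.ofReal γ * volume (Metric.closedBall y R) ≤
      volume (E ∩ Metric.closedBall y R)) :
    γ * (volume (Ioo (y - R) (y + R))).toReal ≤ (volume (Ioo (y - R) (y + R) ∩ E)).toReal := by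
  have hball : Metric.closedBall y R =ᵐ[volume] Ioo (y - R) (y + R) := by
    rw [Real.closedBall_eq_Icc]; exact Ioo_ae_eq_Icc.symm
  rw [measure_congr hball, inter_comm, measure_congr (hball.inter (ae_eq_refl E))] at hdense
  have := ENNReal.toReal_mono (measure_ne_top_of_subset inter_subset_left
    measure_Ioo_lt_top.ne) hdense
  rwa [ENNReal.toReal_mul, ENNReal.toReal_ofReal hγ] at this

noncomputable def decay (K : ℝ) : ℝ := 1 - exp (-(4 * (log K + 1))) / 4

noncomputable def decayExponent (K : ℝ) : ℝ := log (decay K) / log 4⁻¹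

noncomputable def inkConstant (K : ℝ) : ℝ := (decay K)⁻¹ * (16 * exp (16 * (log K + 1)))

section constants

variable {K : ℝ} (hK : 1 ≤ K)
include hK

theorem log_add_one_pos : 0 < log K + 1 := by
  linarith [log_nonneg hK]

theorem decay_mem_Ico : decay K ∈ Ico (3 / 4) 1 := by
  have hexp : exp (-(4 * (log K + 1))) ≤ 1 :=
    exp_le_one_iff.2 (by linarith [log_add_one_pos hK])
  exact ⟨by unfold decay; linarith, by unfold decay; linarith [exp_pos (-(4 * (log K + 1)))]⟩

theorem decayExponent_mem_Ioo : decayExponent K ∈ Ioo 0 1 := by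
  have hdecay := decay_mem_Ico hK
  have hlog4 : log 4⁻¹ < 0 := log_neg (by norm_num) (by norm_num)
  have hlogd : log 4⁻¹ < log (decay K) := log_lt_log (by norm_num) (by linarith [hdecay.1])
  refine ⟨div_pos_of_neg_of_neg (log_neg (by linarith [hdecay.1]) hdecay.2) hlog4, ?_⟩
  rwa [decayExponent, div_lt_one_of_neg hlog4]

theorem inkConstant_pos : 0 < inkConstant K := by
  have := (decay_mem_Ico hK).1
  unfold inkConstant
  positivity

end constants

theorem exists_pow_le_and_pow_le_rpow {q β γ : ℝ} (hq0 : 0 < q) (hq1 : q < 1) (hβ0 : 0 < β)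
    (hβ1 : β ≤ 1) (hγ0 : 0 < γ) (hγ1 : γ ≤ 1) :
    ∃ k : ℕ, γ ≤ q ^ k ∧ β ^ k ≤ β⁻¹ * γ ^ (log β / log q) := by
  set x := log γ / log q
  have hlogq : log q < 0 := log_neg hq0 hq1
  have hx : 0 ≤ x := div_nonneg_of_nonpos (log_nonpos hγ0.le hγ1) hlogq.le
  have hqx : q ^ x = γ := by
    rw [rpow_def_of_pos hq0, mul_div_cancel₀ _ hlogq.ne, exp_log hγ0]
  have hβx : β ^ x = γ ^ (log β / log q) := by
    rw [rpow_def_of_pos hβ0, rpow_def_of_pos hγ0]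
    congr 1
    simp only [x]; ring
  refine ⟨⌊x⌋₊, ?_, ?_⟩
  · rw [← hqx, ← rpow_natCast]
    exact rpow_le_rpow_of_exponent_ge hq0 hq1.le (Nat.floor_le hx)
  · rw [← rpow_natCast, ← hβx, inv_mul_eq_div, ← rpow_sub_one hβ0.ne']
    exact rpow_le_rpow_of_exponent_ge hβ0 hβ1 (by linarith [Nat.lt_floor_add_one x])

/-! ### Weights satisfying Hruščëv's condition -/

noncomputable def weightMeasure (ω : ℝ → ℝ) : Measure ℝ :=
  volume.withDensity fun x => ENNReal.ofReal (ω x)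

theorem weightMeasure_apply (ω : ℝ → ℝ) (s : Set ℝ) :
    weightMeasure ω s = ∫⁻ x in s, ENNReal.ofReal (ω x) :=
  withDensity_apply' _ s

theorem weightMeasure_congr {ω ω' : ℝ → ℝ} (h : ω =ᵐ[volume] ω') :
    weightMeasure ω = weightMeasure ω' :=
  withDensity_congr_ae (h.mono fun _ hx => congrArg ENNReal.ofReal hx)

theorem weightMeasure_absolutelyContinuous (ω : ℝ → ℝ) : weightMeasure ω ≪ volume :=
  withDensity_absolutelyContinuous _ _

/-- Hruščëv's exponential-logarithmic form of the `A∞` condition, on half-open intervals. -/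
structure IsExpLogWeight (ω : ℝ → ℝ) (K : ℝ) : Prop where
  measurable : Measurable ω
  pos : ∀ x, 0 < ω x
  integrableOn : ∀ a b, IntegrableOn ω (Ico a b)
  integrableOn_log : ∀ a b, IntegrableOn (fun x => log (ω x)) (Ico a b)
  one_le : 1 ≤ K
  average_le : ∀ a b, a < b →
    (b - a)⁻¹ * ∫ x in Ico a b, ω x ≤ K * exp ((b - a)⁻¹ * ∫ x in Ico a b, log (ω x))

namespace IsExpLogWeight

variable {ω : ℝ → ℝ} {K : ℝ} (h : IsExpLogWeight ω K)
include h

theorem integral_pos {a b : ℝ} (hab : a < b) : 0 < ∫ x in Ico a b, ω x := by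
  rw [setIntegral_pos_iff_support_of_nonneg_ae (.of_forall fun x => (h.pos x).le)
    (h.integrableOn a b), Function.support_eq_univ fun x => (h.pos x).ne', univ_inter]
  simpa using hab

theorem average_pos {a b : ℝ} (hab : a < b) : 0 < (b - a)⁻¹ * ∫ x in Ico a b, ω x :=
  mul_pos (inv_pos.2 (sub_pos.2 hab)) (h.integral_pos hab)

theorem integral_log_sub_log_add_div_le {a b c : ℝ} (hab : a < b)
    (hc : c = (b - a)⁻¹ * ∫ x in Ico a b, ω x) :
    ∫ x in Ico a b, (log c - log (ω x) + ω x / c) ≤ (log K + 1) * (b - a) := by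
  have hL : 0 < b - a := sub_pos.2 hab
  have hmean : ∫ x in Ico a b, ω x / c = b - a := by
    rw [integral_div, hc]; field_simp [(h.integral_pos hab).ne']
  have hlogc : log c ≤ log K + (b - a)⁻¹ * ∫ x in Ico a b, log (ω x) := by
    have := log_le_log (hc ▸ h.average_pos hab) (hc ▸ h.average_le a b hab)
    rwa [log_mul (by linarith [h.one_le]) (exp_pos _).ne', log_exp] at this
  have hlog_int : IntegrableOn (fun x => log c - log (ω x)) (Ico a b) :=
    (integrable_const _).sub (h.integrableOn_log a b)
  rw [integral_add hlog_int ((h.integrableOn a b).div_const c),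
    integral_sub (integrable_const _) (h.integrableOn_log a b), setIntegral_const, hmean,
    Real.volume_real_Ico_of_le hab.le, smul_eq_mul]
  have := mul_le_mul_of_nonneg_left hlogc hL.le
  rw [mul_add, ← mul_assoc, mul_inv_cancel₀ hL.ne', one_mul] at this
  linarith

/-- Chebyshev's inequality for `log (c / ω) + ω / c ≥ 0`, where `c` is the mean of `ω`. -/
theorem volume_lt_exp_neg_mul_average_le {a b l : ℝ} (hab : a < b) (hl : 0 < l) :
    volume.real {x ∈ Ico a b | ω x < exp (-l) * ((b - a)⁻¹ * ∫ s in Ico a b, ω s)} ≤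
      (log K + 1) / l * (b - a) := by
  set c := (b - a)⁻¹ * ∫ s in Ico a b, ω s with hc
  have hc0 : 0 < c := h.average_pos hab
  set f : ℝ → ℝ := fun x => log c - log (ω x) + ω x / c
  have hf_nonneg : ∀ x, 0 ≤ f x := fun x => by
    have := log_le_sub_one_of_pos (div_pos (h.pos x) hc0)
    rw [log_div (h.pos x).ne' hc0.ne'] at this
    have := div_pos (h.pos x) hc0
    simp only [f]; linarith
  have hf_int : IntegrableOn f (Ico a b) :=
    ((integrable_const _).sub (h.integrableOn_log a b)).add ((h.integrableOn a b).div_const c)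
  have hsub : {x ∈ Ico a b | ω x < exp (-l) * c} ⊆ {x | l ≤ f x} ∩ Ico a b := by
    rintro x ⟨hxI, hx⟩
    refine ⟨?_, hxI⟩
    have := log_lt_log (h.pos x) hx
    rw [log_mul (exp_pos _).ne' hc0.ne', log_exp] at this
    have := div_pos (h.pos x) hc0
    simp only [mem_ofPred_eq, f]; linarith
  have hmarkov := mul_meas_ge_le_integral_of_nonneg (.of_forall hf_nonneg) hf_int l
  rw [measureReal_restrict_apply' measurableSet_Ico] at hmarkov
  have hmono : volume.real {x ∈ Ico a b | ω x < exp (-l) * c} ≤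
      volume.real ({x | l ≤ f x} ∩ Ico a b) :=
    measureReal_mono hsub (measure_ne_top_of_subset inter_subset_right measure_Ico_lt_top.ne)
  have := h.integral_log_sub_log_add_div_le hab hc
  rw [div_mul_eq_mul_div, le_div_iff₀ hl]
  nlinarith

theorem mul_integral_le_setIntegral {a b θ : ℝ} (hab : a < b) (hθ : 0 < θ) {G : Set ℝ}
    (hGm : MeasurableSet G) (hG : G ⊆ Ico a b) (hGθ : θ * (b - a) ≤ volume.real G) :
    θ / 2 * exp (-(2 * (log K + 1) / θ)) * ∫ x in Ico a b, ω x ≤ ∫ x in G, ω x := by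
  set l := 2 * (log K + 1) / θ
  have hl : 0 < l := div_pos (by linarith [log_add_one_pos h.one_le]) hθ
  set c := (b - a)⁻¹ * ∫ s in Ico a b, ω s
  set B := {x ∈ Ico a b | ω x < exp (-l) * c}
  have hBm : MeasurableSet B := measurableSet_Ico.inter (h.measurable measurableSet_Iio)
  have hB : volume.real B ≤ θ / 2 * (b - a) := by
    have := h.volume_lt_exp_neg_mul_average_le hab hl
    rwa [show (log K + 1) / l = θ / 2 by
      simp only [l]; field_simp [(log_add_one_pos h.one_le).ne']] at this
  have hGfin : volume G ≠ ⊤ := measure_ne_top_of_subset hG measure_Ico_lt_top.ne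
  have hGB : θ / 2 * (b - a) ≤ volume.real (G \ B) := by
    linarith [le_measureReal_sdiff (μ := volume) (s₁ := G) (s₂ := B)
      (measure_ne_top_of_subset (fun x (hx : x ∈ B) => hx.1) measure_Ico_lt_top.ne)]
  have hlower : volume.real (G \ B) * (exp (-l) * c) ≤ ∫ x in G \ B, ω x := by
    have := setIntegral_ge_of_const_le (hGm.diff hBm)
      (measure_ne_top_of_subset sdiff_subset hGfin)
      (fun x hx => not_lt.1 fun hlt => hx.2 ⟨hG hx.1, hlt⟩)
      ((h.integrableOn a b).mono_set (sdiff_subset.trans hG))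
    rwa [smul_eq_mul] at this
  have hmono : ∫ x in G \ B, ω x ≤ ∫ x in G, ω x :=
    setIntegral_mono_set ((h.integrableOn a b).mono_set hG)
      (.of_forall fun x => (h.pos x).le) (.of_forall fun _ hx => hx.1)
  have hc : θ / 2 * exp (-l) * ∫ x in Ico a b, ω x = θ / 2 * (b - a) * (exp (-l) * c) := by
    simp only [c]; field_simp [(sub_pos.2 hab).ne']
  rw [hc]
  exact (mul_le_mul_of_nonneg_right hGB
    (mul_pos (exp_pos _) (h.average_pos hab)).le).trans (hlower.trans hmono)

theorem weightMeasure_eq_ofReal_integral {a b : ℝ} {G : Set ℝ} (hG : G ⊆ Ico a b) :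
    weightMeasure ω G = ENNReal.ofReal (∫ x in G, ω x) := by
  rw [weightMeasure_apply, ofReal_integral_eq_lintegral_ofReal
    ((h.integrableOn a b).mono_set hG) (.of_forall fun x => (h.pos x).le)]

theorem weightMeasure_le_decay_mul {a b : ℝ} (hab : a < b) {S : Set ℝ} (hSm : MeasurableSet S)
    (hS : S ⊆ Ico a b) (hSv : volume S ≤ 2⁻¹ * volume (Ico a b)) :
    weightMeasure ω S ≤ ENNReal.ofReal (decay K) * weightMeasure ω (Ico a b) := by
  have hSv' : volume.real S ≤ (b - a) / 2 := by
    have := ENNReal.toReal_mono (ENNReal.mul_ne_top (by simp) measure_Ico_lt_top.ne) hSv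
    rwa [ENNReal.toReal_mul, Real.volume_Ico, ENNReal.toReal_ofReal (sub_pos.2 hab).le,
      ENNReal.toReal_inv, ENNReal.toReal_ofNat, inv_mul_eq_div] at this
  have hGv : 2⁻¹ * (b - a) ≤ volume.real (Ico a b \ S) := by
    rw [measureReal_sdiff hS hSm measure_Ico_lt_top.ne, Real.volume_real_Ico_of_le hab.le]
    linarith
  have hG := h.mul_integral_le_setIntegral hab (by norm_num) (measurableSet_Ico.diff hSm)
    sdiff_subset hGv
  rw [setIntegral_sdiff hSm (h.integrableOn a b) hS] at hG
  rw [h.weightMeasure_eq_ofReal_integral hS, h.weightMeasure_eq_ofReal_integral subset_rfl,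
    ← ENNReal.ofReal_mul (by linarith [(decay_mem_Ico h.one_le).1])]
  refine ENNReal.ofReal_le_ofReal ?_
  have : 2 * (log K + 1) / 2⁻¹ = 4 * (log K + 1) := by ring
  rw [this] at hG
  unfold decay
  linarith

theorem weightMeasure_Ico_le {a b θ : ℝ} (hab : a < b) (hθ : 0 < θ) {G : Set ℝ}
    (hGm : MeasurableSet G) (hG : G ⊆ Ico a b) (hGθ : θ * (b - a) ≤ volume.real G) :
    weightMeasure ω (Ico a b) ≤
      ENNReal.ofReal (2 / θ * exp (2 * (log K + 1) / θ)) * weightMeasure ω G := by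
  have hmass := h.mul_integral_le_setIntegral hab hθ hGm hG hGθ
  rw [h.weightMeasure_eq_ofReal_integral hG, h.weightMeasure_eq_ofReal_integral subset_rfl,
    ← ENNReal.ofReal_mul (by positivity)]
  refine ENNReal.ofReal_le_ofReal ?_
  calc ∫ x in Ico a b, ω x
      = (2 / θ * exp (2 * (log K + 1) / θ)) *
          (θ / 2 * exp (-(2 * (log K + 1) / θ)) * ∫ x in Ico a b, ω x) := by
        rw [exp_neg]; field_simp
    _ ≤ _ := mul_le_mul_of_nonneg_left hmass (by positivity)

theorem weightMeasure_le_mul_decay_mul {a b : ℝ} (hab : a < b) {S : Set ℝ}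
    (hSm : MeasurableSet S) (hS : S ⊆ Ico a b) {t : ℝ≥0∞} (ht0 : t ≠ 0) (ht : t < 1)
    (hSt : volume S ≤ t * (2⁻¹ * volume (Ico a b))) {c : ℝ≥0∞}
    (hsub : ∀ u v, u < v → volume (S ∩ Ico u v) ≤ 2 * t * volume (Ico u v) →
      weightMeasure ω (S ∩ Ico u v) ≤ c * weightMeasure ω (Ico u v)) :
    weightMeasure ω S ≤ c * (ENNReal.ofReal (decay K) * weightMeasure ω (Ico a b)) := by
  obtain ⟨𝒥, hcount, hdisj, h𝒥, hnull⟩ :=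
    exists_calderonZygmund hab hSm hS ht (hSt.trans (mul_le_mul_of_nonneg_left
      (mul_le_of_le_one_left' (ENNReal.inv_le_one.2 one_le_two)) zero_le))
  have hJm : ∀ J ∈ 𝒥, MeasurableSet J := fun J hJ => by
    obtain ⟨u, v, -, rfl⟩ := (h𝒥 J hJ).1
    exact measurableSet_Ico
  have hΩm : MeasurableSet (⋃₀ 𝒥) := .sUnion hcount hJm
  have hΩ : volume (⋃₀ 𝒥) ≤ 2⁻¹ * volume (Ico a b) :=
    (ENNReal.mul_le_mul_iff_right ht0 ht.ne_top).1 <| (mul_measure_sUnion_le hcount hdisj hJm hSm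
      fun J hJ => (h𝒥 J hJ).2.2.1.le).trans hSt
  calc weightMeasure ω S ≤ weightMeasure ω (S ∩ ⋃₀ 𝒥) := by
        rw [← measure_inter_add_sdiff S hΩm, weightMeasure_absolutelyContinuous ω hnull, add_zero]
    _ ≤ ∑' J : 𝒥, weightMeasure ω (S ∩ J) := by
        rw [sUnion_eq_biUnion, inter_iUnion₂]
        exact measure_biUnion_le _ hcount _
    _ ≤ ∑' J : 𝒥, c * weightMeasure ω J := ENNReal.tsum_le_tsum fun J => by
        obtain ⟨⟨u, v, huv, hJ⟩, -, -, hSJ⟩ := h𝒥 J J.2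
        rw [hJ] at hSJ ⊢
        exact hsub u v huv hSJ
    _ = c * weightMeasure ω (⋃₀ 𝒥) := by
        rw [ENNReal.tsum_mul_left, measure_sUnion hcount hdisj hJm]
    _ ≤ c * (ENNReal.ofReal (decay K) * weightMeasure ω (Ico a b)) := by
        gcongr
        exact h.weightMeasure_le_decay_mul hab hΩm (sUnion_subset fun J hJ => (h𝒥 J hJ).2.1) hΩ

theorem weightMeasure_le_decay_pow_mul (k : ℕ) {a b : ℝ} (hab : a < b) {S : Set ℝ}
    (hSm : MeasurableSet S) (hS : S ⊆ Ico a b) (hSv : volume S ≤ 4⁻¹ ^ k * volume (Ico a b)) :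
    weightMeasure ω S ≤ ENNReal.ofReal (decay K) ^ k * weightMeasure ω (Ico a b) := by
  induction k generalizing a b S with
  | zero => simpa using measure_mono hS
  | succ k ih =>
    have h4 : (2⁻¹ : ℝ≥0∞) * 2⁻¹ = 4⁻¹ := by
      rw [← ENNReal.mul_inv (by simp) (by simp)]; norm_num
    have ht : 2⁻¹ * 4⁻¹ ^ k < (1 : ℝ≥0∞) :=
      (mul_le_of_le_one_right' (pow_le_one₀ zero_le (ENNReal.inv_le_one.2 (by norm_num)))).trans_lt
        (ENNReal.inv_lt_one.2 (by norm_num))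
    have htwo : 2 * (2⁻¹ * 4⁻¹ ^ k) = (4⁻¹ : ℝ≥0∞) ^ k := by
      rw [← mul_assoc, ENNReal.mul_inv_cancel two_ne_zero ENNReal.ofNat_ne_top, one_mul]
    rw [pow_succ, mul_assoc]
    exact h.weightMeasure_le_mul_decay_mul hab hSm hS (by simp) ht
      (hSv.trans_eq (by rw [pow_succ, ← h4]; ring)) fun u v huv hSJ =>
        ih huv (hSm.inter measurableSet_Ico) inter_subset_right (htwo ▸ hSJ)

theorem weightMeasure_le_rpow_mul {a b γ : ℝ} (hab : a < b) (hγ0 : 0 < γ) (hγ1 : γ ≤ 1)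
    {S : Set ℝ} (hSm : MeasurableSet S) (hS : S ⊆ Ico a b)
    (hSv : volume S ≤ ENNReal.ofReal γ * volume (Ico a b)) :
    weightMeasure ω S ≤
      ENNReal.ofReal ((decay K)⁻¹ * γ ^ decayExponent K) * weightMeasure ω (Ico a b) := by
  have hdecay := decay_mem_Ico h.one_le
  obtain ⟨k, hγk, hdk⟩ := exists_pow_le_and_pow_le_rpow (q := 4⁻¹) (by norm_num) (by norm_num)
    (by linarith [hdecay.1]) hdecay.2.le hγ0 hγ1
  have hSk : volume S ≤ 4⁻¹ ^ k * volume (Ico a b) := by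
    refine hSv.trans (mul_le_mul_of_nonneg_right ?_ zero_le)
    rw [← ENNReal.ofReal_ofNat 4, ← ENNReal.ofReal_inv_of_pos (by norm_num),
      ← ENNReal.ofReal_pow (by norm_num)]
    exact ENNReal.ofReal_le_ofReal hγk
  refine (h.weightMeasure_le_decay_pow_mul k hab hSm hS hSk).trans
    (mul_le_mul_of_nonneg_right ?_ zero_le)
  rw [← ENNReal.ofReal_pow (by linarith [hdecay.1])]
  exact ENNReal.ofReal_le_ofReal hdk

theorem weightMeasure_inter_closedBall_le {E : Set ℝ} (hEm : MeasurableSet E) {γ : ℝ}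
    (hγ0 : 0 < γ) (hγ1 : γ ≤ 1) {y R : ℝ} (hR : 0 < R)
    (hsparse : volume (E ∩ Metric.closedBall y (4 * R)) <
      ENNReal.ofReal γ * volume (Metric.closedBall y (4 * R))) :
    weightMeasure ω (E ∩ Metric.closedBall y (4 * R)) ≤
      ENNReal.ofReal (inkConstant K * γ ^ decayExponent K) * weightMeasure ω (Ioo (y - R) y) := by
  have hball : Metric.closedBall y (4 * R) =ᵐ[volume] Ico (y - 4 * R) (y + 4 * R) := by
    rw [Real.closedBall_eq_Icc]; exact Ico_ae_eq_Icc.symm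
  have hEball := (ae_eq_refl E).inter hball
  rw [measure_congr hEball, measure_congr hball] at hsparse
  rw [measure_congr ((weightMeasure_absolutelyContinuous ω).ae_eq hEball)]
  have hdecay := decay_mem_Ico h.one_le
  have hdoubling := h.weightMeasure_Ico_le (a := y - 4 * R) (b := y + 4 * R) (θ := 8⁻¹)
    (by linarith) (by norm_num)
    measurableSet_Ioo (Ioo_subset_Ico_self.trans (Ico_subset_Ico (by linarith) (by linarith)))
    (G := Ioo (y - R) y) (by rw [Real.volume_real_Ioo_of_le (by linarith)]; linarith)
  have hconst : 2 / 8⁻¹ * exp (2 * (log K + 1) / 8⁻¹) = 16 * exp (16 * (log K + 1)) := by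
    norm_num; ring_nf
  rw [hconst] at hdoubling
  calc weightMeasure ω (E ∩ Ico (y - 4 * R) (y + 4 * R))
      ≤ ENNReal.ofReal ((decay K)⁻¹ * γ ^ decayExponent K) *
          weightMeasure ω (Ico (y - 4 * R) (y + 4 * R)) :=
        h.weightMeasure_le_rpow_mul (by linarith) hγ0 hγ1 (hEm.inter measurableSet_Ico)
          inter_subset_right hsparse.le
    _ ≤ ENNReal.ofReal ((decay K)⁻¹ * γ ^ decayExponent K) *
          (ENNReal.ofReal (16 * exp (16 * (log K + 1))) * weightMeasure ω (Ioo (y - R) y)) := by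
        gcongr
    _ = _ := by
        rw [← mul_assoc, ← ENNReal.ofReal_mul (by have := hdecay.1; positivity), inkConstant]
        ring_nf

theorem weightMeasure_le_inkConstant_mul {γ : ℝ} (hγ0 : 0 < γ) (hγ1 : γ < 1) {E F : Set ℝ}
    (hEm : MeasurableSet E) (hE : volume E ≠ ⊤)
    (hleft : ∀ y ∈ E, ∀ R > 0, ENNReal.ofReal γ * volume (Metric.closedBall y R) ≤
      volume (E ∩ Metric.closedBall y R) → Ioo (y - R) y ⊆ F) :
    weightMeasure ω E ≤
      ENNReal.ofReal (inkConstant K * γ ^ decayExponent K) * weightMeasure ω F := by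
  set C := ENNReal.ofReal (inkConstant K * γ ^ decayExponent K)
  set G := {x ∈ E | ∀ c < (1 : ℝ≥0∞), ∀ᶠ r in 𝓝[>] (0 : ℝ),
    c * volume (Metric.closedBall x r) < volume (E ∩ Metric.closedBall x r)}
  have hG : volume (E \ G) = 0 := by
    have := ae_eventually_lt_volume_inter_closedBall E
    rw [ae_iff, Measure.restrict_apply' hEm] at this
    refine measure_mono_null (fun x hx => ?_) this
    exact ⟨fun hx' => hx.2 ⟨hx.1, hx'⟩, hx.1⟩
  choose! R hR0 hRdense hRsparse using fun x (hx : x ∈ G) =>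
    exists_stopping_radius hE hγ0 hγ1 (τ := 4) (by norm_num) hx.2
  obtain ⟨u, huG, hucount, hudisj, hGU⟩ := exists_countable_pairwiseDisjoint_closedBall_cover hR0
    fun x hx => le_of_mul_volume_closedBall_le hE hγ0
      ((hRdense x hx).trans (measure_mono inter_subset_left))
  set U := ⋃ y ∈ u, Metric.closedBall y (4 * R y)
  have hJdisj : u.PairwiseDisjoint fun y => Ioo (y - R y) y :=
    hudisj.mono fun y s hs => by
      rw [Metric.mem_closedBall, Real.dist_eq, abs_le]
      constructor <;> linarith [hs.1, hs.2]
  calc weightMeasure ω E ≤ weightMeasure ω (E ∩ U) := by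
        refine (measure_le_inter_add_sdiff _ E U).trans_eq ?_
        rw [weightMeasure_absolutelyContinuous ω
          (measure_mono_null (sdiff_subset_sdiff_right hGU) hG), add_zero]
    _ ≤ ∑' y : u, weightMeasure ω (E ∩ Metric.closedBall y (4 * R y)) := by
        rw [inter_iUnion₂]
        exact measure_biUnion_le _ hucount _
    _ ≤ ∑' y : u, C * weightMeasure ω (Ioo (y - R y) y) :=
        ENNReal.tsum_le_tsum fun y => h.weightMeasure_inter_closedBall_le hEm hγ0 hγ1.le
          (hR0 y (huG y.2)) (hRsparse y (huG y.2))
    _ = C * weightMeasure ω (⋃ y ∈ u, Ioo (y - R y) y) := by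
        rw [ENNReal.tsum_mul_left, measure_biUnion hucount hJdisj fun _ _ => measurableSet_Ioo]
    _ ≤ C * weightMeasure ω F := by
        gcongr
        exact iUnion₂_subset fun y hy =>
          hleft y (huG hy).1 _ (hR0 y (huG hy)) (hRdense y (huG hy))

end IsExpLogWeight

/-! ### From `A_p` to Hruščëv's condition -/

theorem abs_log_le_add_mul_rpow {w p : ℝ} (hw : 0 < w) (hp : 1 < p) :
    |log w| ≤ w + (p - 1) * w ^ (1 / (1 - p)) := by
  have hσ : 0 < w ^ (1 / (1 - p)) := rpow_pos_of_pos hw _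
  rcases le_or_gt 1 w with h1 | h1
  · rw [abs_of_nonneg (log_nonneg h1)]
    nlinarith [log_le_sub_one_of_pos hw, mul_pos (sub_pos.2 hp) hσ]
  · rw [abs_of_neg (log_neg hw h1)]
    have hlog : -log w = (p - 1) * log (w ^ (1 / (1 - p))) := by
      rw [log_rpow hw]
      field_simp [(by linarith : (1 : ℝ) - p ≠ 0)]
      ring
    rw [hlog]
    nlinarith [log_le_sub_one_of_pos hσ, sub_pos.2 hp]

theorem exp_neg_average_log_le {α : Type*} [MeasurableSpace α] {μ : Measure α}
    [IsFiniteMeasure μ] [NeZero μ] {f : α → ℝ} {p : ℝ} (hp : 1 < p) (hf : ∀ x, 0 < f x)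
    (hlog : Integrable (fun x => log (f x)) μ) (hσ : Integrable (fun x => f x ^ (1 / (1 - p))) μ) :
    exp (-⨍ x, log (f x) ∂μ) ≤ (⨍ x, f x ^ (1 / (1 - p)) ∂μ) ^ (p - 1) := by
  have hrpow : ∀ x, exp (1 / (1 - p) * log (f x)) = f x ^ (1 / (1 - p)) := fun x => by
    rw [rpow_def_of_pos (hf x), mul_comm]
  have hjensen := convexOn_exp.map_average_le continuous_exp.continuousOn isClosed_univ
    (.of_forall fun x => mem_univ (1 / (1 - p) * log (f x))) (hlog.const_mul _)
    (by simpa only [Function.comp_def, hrpow] using hσ)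
  simp only [hrpow] at hjensen
  have hmean : ⨍ x, 1 / (1 - p) * log (f x) ∂μ = 1 / (1 - p) * ⨍ x, log (f x) ∂μ := by
    simp only [average_eq, integral_const_mul, smul_eq_mul]; ring
  rw [hmean] at hjensen
  calc exp (-⨍ x, log (f x) ∂μ) = exp (1 / (1 - p) * ⨍ x, log (f x) ∂μ) ^ (p - 1) := by
        rw [← exp_mul]
        congr 1
        field_simp [(by linarith : (1 : ℝ) - p ≠ 0)]
        ring
    _ ≤ _ := rpow_le_rpow (exp_pos _).le hjensen (by linarith)

theorem setAverage_Ioo (f : ℝ → ℝ) {a b : ℝ} (hab : a ≤ b) :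
    ⨍ x in Ioo a b, f x = (b - a)⁻¹ * ∫ x in Ioo a b, f x := by
  rw [setAverage_eq, Real.volume_real_Ioo_of_le hab, smul_eq_mul]

theorem exists_measurable_pos_ae_eq {α : Type*} [MeasurableSpace α] {μ : Measure α}
    {ω : α → ℝ} (hpos : ∀ x, 0 < ω x) (hω : AEMeasurable ω μ) :
    ∃ ω' : α → ℝ, Measurable ω' ∧ (∀ x, 0 < ω' x) ∧ ω =ᵐ[μ] ω' := by
  classical
  refine ⟨fun x => if 0 < hω.mk ω x then hω.mk ω x else 1,
    .ite (measurableSet_lt measurable_const hω.measurable_mk) hω.measurable_mk measurable_const,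
    fun x => ?_, ?_⟩
  · dsimp only; split_ifs with hx
    exacts [hx, one_pos]
  · filter_upwards [hω.ae_eq_mk] with x hx
    rw [← hx, if_pos (hpos x)]

theorem IsExpLogWeight.of_Ap {ω : ℝ → ℝ} {p K₀ : ℝ} (hp : 1 < p) (hmeas : Measurable ω)
    (hpos : ∀ x, 0 < ω x) (hω : LocallyIntegrable ω)
    (hσ : LocallyIntegrable fun x => ω x ^ (1 / (1 - p)))
    (hAp : ∀ a b, a < b →
      (⨍ x in Ioo a b, ω x) * (⨍ x in Ioo a b, ω x ^ (1 / (1 - p))) ^ (p - 1) ≤ K₀) :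
    IsExpLogWeight ω (max K₀ 1) := by
  have hωI : ∀ a b, IntegrableOn ω (Icc a b) := fun a b => hω.integrableOn_isCompact isCompact_Icc
  have hσI : ∀ a b, IntegrableOn (fun x => ω x ^ (1 / (1 - p))) (Icc a b) := fun a b =>
    hσ.integrableOn_isCompact isCompact_Icc
  have hlogI : ∀ a b, IntegrableOn (fun x => log (ω x)) (Icc a b) := fun a b =>
    ((hωI a b).add ((hσI a b).const_mul (p - 1))).mono'
      (measurable_log.comp hmeas).aestronglyMeasurable
      (.of_forall fun x => (Real.norm_eq_abs _).trans_le (abs_log_le_add_mul_rpow (hpos x) hp))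
  refine ⟨hmeas, hpos, fun a b => (hωI a b).mono_set Ico_subset_Icc_self,
    fun a b => (hlogI a b).mono_set Ico_subset_Icc_self, le_max_right _ _, fun a b hab => ?_⟩
  have : IsFiniteMeasure (volume.restrict (Ioo a b)) := ⟨by simp⟩
  have : NeZero (volume.restrict (Ioo a b)) := ⟨by simp [hab]⟩
  have hjensen := exp_neg_average_log_le hp hpos ((hlogI a b).mono_set Ioo_subset_Icc_self)
    ((hσI a b).mono_set Ioo_subset_Icc_self)
  have hAp := hAp a b hab
  simp only [setAverage_Ioo _ hab.le] at hjensen hAp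
  rw [integral_Ico_eq_integral_Ioo, integral_Ico_eq_integral_Ioo]
  set L := (b - a)⁻¹ * ∫ x in Ioo a b, log (ω x)
  have hA : 0 ≤ (b - a)⁻¹ * ∫ x in Ioo a b, ω x :=
    mul_nonneg (inv_nonneg.2 (sub_pos.2 hab).le)
      (setIntegral_nonneg measurableSet_Ioo fun x _ => (hpos x).le)
  have hK₀ : ((b - a)⁻¹ * ∫ x in Ioo a b, ω x) * exp (-L) ≤ K₀ :=
    (mul_le_mul_of_nonneg_left hjensen hA).trans hAp
  calc (b - a)⁻¹ * ∫ x in Ioo a b, ω x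
      = ((b - a)⁻¹ * ∫ x in Ioo a b, ω x) * exp (-L) * exp L := by
        rw [mul_assoc, ← exp_add, neg_add_cancel, exp_zero, mul_one]
    _ ≤ max K₀ 1 * exp L :=
        mul_le_mul_of_nonneg_right (hK₀.trans (le_max_left _ _)) (exp_pos L).le

end InkSpots

open InkSpots

theorem stmt8_general (K₀ : ℝ) :
    ∃ N δ : ℝ, 0 < N ∧ 0 < δ ∧ δ < 1 ∧
      ∀ p : ℝ, 1 < p →
      ∀ ω : ℝ → ℝ, (∀ s, 0 < ω s) → LocallyIntegrable ω →
        LocallyIntegrable (fun s => ω s ^ (1 / (1 - p))) →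
        (∀ t : ℝ, ∀ r > (0 : ℝ),
          ((1 / r) * ∫ s in Set.Ioo (t - r) t, ω s) *
            ((1 / r) * ∫ s in Set.Ioo (t - r) t, ω s ^ (1 / (1 - p))) ^ (p - 1) ≤ K₀) →
      ∀ T : EReal, ∀ γ : ℝ, γ ∈ Set.Ioo (0 : ℝ) 1 →
      ∀ E F : Set ℝ, MeasurableSet E → MeasurableSet F → E ⊆ F →
        F ⊆ {s : ℝ | (s : EReal) < T} →
        volume E < ⊤ →
        (∀ t : ℝ, (t : EReal) ≤ T → ∀ R > (0 : ℝ),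
          γ * (volume (Set.Ioo (t - R) (t + R))).toReal ≤
            (volume (Set.Ioo (t - R) (t + R) ∩ E)).toReal →
          Set.Ioo (t - R) (t + R) ∩ {s : ℝ | (s : EReal) ≤ T} ⊆ F) →
        ∫⁻ s in E, ENNReal.ofReal (ω s) ≤
          ENNReal.ofReal (N * γ ^ δ) * ∫⁻ s in F, ENNReal.ofReal (ω s) := by
  have hK : 1 ≤ max K₀ 1 := le_max_right _ _
  refine ⟨_, _, inkConstant_pos hK, (decayExponent_mem_Ioo hK).1, (decayExponent_mem_Ioo hK).2,
    fun p hp ω hω hωloc hσloc hAp T γ hγ E F hEm _ hEF hFT hE hink => ?_⟩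
  obtain ⟨ω', hmeas, hpos, hae⟩ :=
    exists_measurable_pos_ae_eq hω hωloc.aestronglyMeasurable.aemeasurable
  have hσae : (fun s => ω s ^ (1 / (1 - p))) =ᵐ[volume] fun s => ω' s ^ (1 / (1 - p)) :=
    hae.fun_comp (· ^ (1 / (1 - p)))
  have hw : IsExpLogWeight ω' (max K₀ 1) := .of_Ap hp hmeas hpos (hωloc.congr hae)
    (hσloc.congr hσae) fun a b hab => by
      have := hAp b (b - a) (sub_pos.2 hab)
      rwa [sub_sub_cancel, one_div, ← setAverage_Ioo _ hab.le, ← setAverage_Ioo _ hab.le,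
        average_congr (ae_restrict_of_ae hae), average_congr (ae_restrict_of_ae hσae)] at this
  have hleft : ∀ y ∈ E, ∀ R > 0, ENNReal.ofReal γ * volume (Metric.closedBall y R) ≤
      volume (E ∩ Metric.closedBall y R) → Ioo (y - R) y ⊆ F := by
    intro y hy R hR hdense s hs
    have hyT := hFT (hEF hy)
    refine hink y hyT.le R hR ?_ ⟨⟨by linarith [hs.1], by linarith [hs.2]⟩, ?_⟩
    exacts [mul_toReal_volume_Ioo_le hγ.1.le hdense,
      (EReal.coe_le_coe_iff.2 hs.2.le).trans hyT.le]
  rw [← weightMeasure_apply, ← weightMeasure_apply, weightMeasure_congr hae]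
  exact hw.weightMeasure_le_inkConstant_mul hγ.1 hγ.2 hEm hE.ne hleft

/-- Weighted "crawling of ink spots" lemma on the real line for `A_p`
weights with characteristic bounded by `K₀`. -/
theorem stmt8 (K₀ : ℝ) (hK₀ : 0 < K₀) :
    ∃ N δ : ℝ, 0 < N ∧ 0 < δ ∧ δ < 1 ∧
      ∀ p : ℝ, 1 < p →
      ∀ ω : ℝ → ℝ, (∀ s, 0 < ω s) → LocallyIntegrable ω →
        LocallyIntegrable (fun s => ω s ^ (1 / (1 - p))) →
        (∀ t : ℝ, ∀ r > (0 : ℝ),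
          ((1 / r) * ∫ s in Set.Ioo (t - r) t, ω s) *
            ((1 / r) * ∫ s in Set.Ioo (t - r) t, ω s ^ (1 / (1 - p))) ^ (p - 1) ≤ K₀) →
      ∀ T : EReal, ∀ γ : ℝ, γ ∈ Set.Ioo (0 : ℝ) 1 →
      ∀ E F : Set ℝ, MeasurableSet E → MeasurableSet F → E ⊆ F →
        F ⊆ {s : ℝ | (s : EReal) < T} →
        volume E < ⊤ →
        (∀ t : ℝ, (t : EReal) ≤ T → ∀ R > (0 : ℝ),
          γ * (volume (Set.Ioo (t - R) (t + R))).toReal ≤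
            (volume (Set.Ioo (t - R) (t + R) ∩ E)).toReal →
          Set.Ioo (t - R) (t + R) ∩ {s : ℝ | (s : EReal) ≤ T} ⊆ F) →
        ∫⁻ s in E, ENNReal.ofReal (ω s) ≤
          ENNReal.ofReal (N * γ ^ δ) * ∫⁻ s in F, ENNReal.ofReal (ω s) :=
  stmt8_general K₀
end

section
/- With the change of variables $y$ of the previous statement and $\tilde a_{kl} := \sum_{i,j=1}^d \frac{a_{ij}+a_{ji}}{2}\frac{\partial y_k}{\partial x_i}\frac{\partial y_l}{\partial x_j}$, one has $\tilde a_{dd}=a_{dd}$, $\tilde a_{dl}=\tilde a_{kd}=0$ for $k,l\in\{1,\dots,d-1\}$, and there exists $\tilde\nu>0$ depending only on $\nu$ and $d$ such that $\tilde a_{kl}\xi_k\xi_l \geq \tilde\nu|\xi|^2$ for all $\xi\in\mathbb{R}^d$. -/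
/-!
`P` is the shear `1 + c e_dᵀ` (with `c_k = -s_kd / s_dd`, `s` the symmetric part of `a`), so
`ã = P s Pᵀ` is one step of symmetric Gaussian elimination on the last row and column. The
quadratic form of `ã` at `ξ` is that of `a` at `η = Pᵀ ξ`, and `ξ` is recovered from `η` by the
opposite shear, whose squared entries are at most `1 + ν⁻⁴` since `a_dd ≥ ν` and `|a_ij| ≤ ν⁻¹`;
hence `|ξ|² ≤ d² (1 + ν⁻⁴) |η|²`.
-/

open Finset Matrix

section QuadraticForm

variable {ι κ R : Type*} [Fintype ι]

theorem mul_mul_transpose_apply [CommSemiring R] (P : Matrix κ ι R) (A : Matrix ι ι R)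
    (k l : κ) : (P * A * Pᵀ) k l = ∑ i, ∑ j, A i j * P k i * P l j := by
  simp only [mul_apply, transpose_apply, sum_mul]
  rw [sum_comm]
  exact sum_congr rfl fun i _ => sum_congr rfl fun j _ => by ring

theorem sum_sum_mul_mul_eq_dotProduct_mulVec [CommSemiring R] (A : Matrix ι ι R) (ξ : ι → R) :
    ∑ i, ∑ j, A i j * ξ i * ξ j = ξ ⬝ᵥ A *ᵥ ξ := by
  simp only [dotProduct, mulVec, mul_sum]
  exact sum_congr rfl fun i _ => sum_congr rfl fun j _ => by ring

theorem dotProduct_mulVec_symmetrize [Field R] [NeZero (2 : R)] (A : Matrix ι ι R) (ξ : ι → R) :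
    ξ ⬝ᵥ (fun i j => (A i j + A j i) / 2 : Matrix ι ι R) *ᵥ ξ = ξ ⬝ᵥ A *ᵥ ξ := by
  have htranspose : ξ ⬝ᵥ Aᵀ *ᵥ ξ = ξ ⬝ᵥ A *ᵥ ξ := by
    rw [mulVec_transpose, dotProduct_comm, dotProduct_mulVec]
  have hsymm : (fun i j => (A i j + A j i) / 2 : Matrix ι ι R) = (2⁻¹ : R) • (A + Aᵀ) := by
    ext i j
    simp only [Matrix.smul_apply, Matrix.add_apply, transpose_apply, smul_eq_mul]
    ring
  rw [hsymm, smul_mulVec, add_mulVec, dotProduct_smul, dotProduct_add, htranspose, smul_eq_mul,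
    ← two_mul, inv_mul_cancel_left₀ two_ne_zero]

variable [Fintype κ]

theorem dotProduct_mul_mul_transpose_mulVec [CommSemiring R] (P : Matrix κ ι R)
    (A : Matrix ι ι R) (ξ : κ → R) :
    ξ ⬝ᵥ (P * A * Pᵀ) *ᵥ ξ = (ξ ᵥ* P) ⬝ᵥ A *ᵥ (ξ ᵥ* P) := by
  rw [← mulVec_mulVec, ← mulVec_mulVec, mulVec_transpose, dotProduct_mulVec]

theorem sum_sq_vecMul_le (η : κ → ℝ) (Q : Matrix κ ι ℝ) :
    ∑ i, (η ᵥ* Q) i ^ 2 ≤ (∑ k, ∑ i, Q k i ^ 2) * ∑ k, η k ^ 2 := by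
  calc ∑ i, (η ᵥ* Q) i ^ 2 ≤ ∑ i, (∑ k, η k ^ 2) * ∑ k, Q k i ^ 2 :=
        sum_le_sum fun i _ => sum_mul_sq_le_sq_mul_sq _ _ _
    _ = (∑ k, ∑ i, Q k i ^ 2) * ∑ k, η k ^ 2 := by
        rw [← mul_sum, sum_comm, mul_comm]

theorem le_dotProduct_mul_mul_transpose_mulVec {A : Matrix ι ι ℝ} {P : Matrix κ ι ℝ}
    {Q : Matrix ι κ ℝ} [DecidableEq κ] (hPQ : P * Q = 1) {ν K : ℝ} (hν : 0 ≤ ν) (hK : 0 < K)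
    (hQ : ∑ k, ∑ i, Q k i ^ 2 ≤ K) (hA : ∀ η, ν * ∑ i, η i ^ 2 ≤ η ⬝ᵥ A *ᵥ η) (ξ : κ → ℝ) :
    ν / K * ∑ k, ξ k ^ 2 ≤ ξ ⬝ᵥ (P * A * Pᵀ) *ᵥ ξ := by
  set η := ξ ᵥ* P
  have hξ : ξ = η ᵥ* Q := by rw [vecMul_vecMul, hPQ, vecMul_one]
  have hnorm : ∑ k, ξ k ^ 2 ≤ K * ∑ i, η i ^ 2 := by
    rw [hξ]
    exact (sum_sq_vecMul_le η Q).trans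
      (mul_le_mul_of_nonneg_right hQ (sum_nonneg fun i _ => sq_nonneg _))
  calc ν / K * ∑ k, ξ k ^ 2 ≤ ν / K * (K * ∑ i, η i ^ 2) := by gcongr
    _ = ν * ∑ i, η i ^ 2 := by field_simp
    _ ≤ η ⬝ᵥ A *ᵥ η := hA η
    _ = ξ ⬝ᵥ (P * A * Pᵀ) *ᵥ ξ := (dotProduct_mul_mul_transpose_mulVec P A ξ).symm

theorem le_apply_self_of_coercive [DecidableEq ι] {A : Matrix ι ι ℝ} {ν : ℝ}
    (hA : ∀ η, ν * ∑ i, η i ^ 2 ≤ η ⬝ᵥ A *ᵥ η) (d : ι) : ν ≤ A d d := by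
  simpa [Pi.single_apply] using hA (Pi.single d 1)

end QuadraticForm

section Shear

variable {ι κ R : Type*} [DecidableEq ι]

/-- `1 + c e_dᵀ` with the diagonal kept at `1`; the entry `c d` is never used. -/
def shear [Zero R] [One R] (d : ι) (c : ι → R) : Matrix ι ι R :=
  fun k i => if k = i then 1 else if i = d then c k else 0

variable (d : ι) (c : ι → R)

theorem shear_row_self [Zero R] [One R] : shear d c d = Pi.single d 1 := by
  ext i
  by_cases h : d = i <;> simp [shear, h, eq_comm]

theorem shear_row_of_ne [AddZeroClass R] [One R] {k : ι} (hk : k ≠ d) :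
    shear d c k = Pi.single k 1 + Pi.single d (c k) := by
  ext i
  by_cases hi : i = d
  · subst hi; simp [shear, hk, Ne.symm hk]
  · by_cases hki : k = i <;> simp [shear, hki, hi, eq_comm]

theorem shear_mul_apply_self [Fintype ι] [NonAssocSemiring R] (M : Matrix ι κ R) (j : κ) :
    (shear d c * M) d j = M d j := by
  simp [mul_apply, shear_row_self, Pi.single_apply]

theorem shear_mul_apply_of_ne [Fintype ι] [NonAssocSemiring R] (M : Matrix ι κ R) {k : ι}
    (hk : k ≠ d) (j : κ) : (shear d c * M) k j = M k j + c k * M d j := by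
  simp [mul_apply, shear_row_of_ne d c hk, Pi.single_apply, add_mul, sum_add_distrib]

theorem mul_shear_transpose_apply_self [Fintype ι] [NonAssocSemiring R] (M : Matrix κ ι R)
    (k : κ) :    (M * (shear d c)ᵀ) k d = M k d := by
  simp [mul_apply, shear_row_self, Pi.single_apply]

theorem mul_shear_transpose_apply_of_ne [Fintype ι] [NonAssocSemiring R] (M : Matrix κ ι R)
    (k : κ) {l : ι} (hl : l ≠ d) : (M * (shear d c)ᵀ) k l = M k l + M k d * c l := by
  simp [mul_apply, shear_row_of_ne d c hl, Pi.single_apply, mul_add, sum_add_distrib]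

theorem shear_mul_shear_neg [Fintype ι] [Ring R] : shear d c * shear d (-c) = 1 := by
  ext k i
  by_cases hk : k = d
  · subst hk
    rw [shear_mul_apply_self, shear_row_self]
    simp [one_apply, Pi.single_apply, eq_comm]
  · rw [shear_mul_apply_of_ne _ _ _ hk, shear_row_self, shear_row_of_ne d _ hk]
    by_cases hi : i = d
    · subst hi; simp [one_apply, hk]
    · simp [one_apply, Pi.single_apply, hi, eq_comm]

theorem sum_sum_sq_shear_le [Fintype ι] {B : ℝ} (c : ι → ℝ) (hc : ∀ k, c k ^ 2 ≤ B) :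
    ∑ k, ∑ i, shear d c k i ^ 2 ≤ Fintype.card ι ^ 2 * (1 + B) := by
  have hentry : ∀ k i, shear d c k i ^ 2 ≤ 1 + B := fun k i => by
    have hB : 0 ≤ B := (sq_nonneg (c k)).trans (hc k)
    unfold shear
    split_ifs <;> linarith [hc k]
  calc ∑ k, ∑ i, shear d c k i ^ 2 ≤ ∑ _k : ι, ∑ _i : ι, (1 + B) :=
        sum_le_sum fun k _ => sum_le_sum fun i _ => hentry k i
    _ = Fintype.card ι ^ 2 * (1 + B) := by
        simp only [sum_const, card_univ, nsmul_eq_mul]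
        ring

end Shear

theorem sq_div_two_mul_le {ν x y z : ℝ} (hν : 0 < ν) (hx : |x| ≤ ν⁻¹) (hy : |y| ≤ ν⁻¹)
    (hz : ν ≤ z) : ((x + y) / (2 * z)) ^ 2 ≤ ν⁻¹ ^ 4 := by
  have hz0 : 0 < z := hν.trans_le hz
  have habs : |(x + y) / (2 * z)| ≤ ν⁻¹ ^ 2 := by
    rw [abs_div, abs_of_pos (by positivity : 0 < 2 * z), div_le_iff₀ (by positivity)]
    have hνz : 1 ≤ ν⁻¹ * z := by rwa [← div_eq_inv_mul, one_le_div hν]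
    calc |x + y| ≤ ν⁻¹ + ν⁻¹ := (abs_add_le x y).trans (add_le_add hx hy)
      _ ≤ ν⁻¹ ^ 2 * (2 * z) := by nlinarith [inv_pos.2 hν]
  calc ((x + y) / (2 * z)) ^ 2 = |(x + y) / (2 * z)| ^ 2 := (sq_abs _).symm
    _ ≤ (ν⁻¹ ^ 2) ^ 2 := pow_le_pow_left₀ (abs_nonneg _) habs 2
    _ = ν⁻¹ ^ 4 := by ring

theorem stmt13_general (n : ℕ) (ν : ℝ) (hν : 0 < ν) :
    ∃ ν' : ℝ, 0 < ν' ∧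
      ∀ a : Fin (n + 1) → Fin (n + 1) → ℝ,
        (∀ ξ : Fin (n + 1) → ℝ,
          ν * ∑ i, ξ i ^ 2 ≤ ∑ i, ∑ j, a i j * ξ i * ξ j) →
        (∀ i j, |a i j| ≤ ν⁻¹) →
        let P : Fin (n + 1) → Fin (n + 1) → ℝ := fun k i =>
          if k = i then 1
          else if i = Fin.last n then
            -((a k (Fin.last n) + a (Fin.last n) k) /
              (2 * a (Fin.last n) (Fin.last n)))
          else 0
        let ta : Fin (n + 1) → Fin (n + 1) → ℝ := fun k l =>
          ∑ i, ∑ j, (a i j + a j i) / 2 * P k i * P l j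
        ta (Fin.last n) (Fin.last n) = a (Fin.last n) (Fin.last n) ∧
        (∀ k, k ≠ Fin.last n → ta (Fin.last n) k = 0 ∧ ta k (Fin.last n) = 0) ∧
        ∀ ξ : Fin (n + 1) → ℝ,
          ν' * ∑ i, ξ i ^ 2 ≤ ∑ k, ∑ l, ta k l * ξ k * ξ l := by
  refine ⟨ν / ((n + 1) ^ 2 * (1 + ν⁻¹ ^ 4)), by positivity, fun a hell habs => ?_⟩
  intro P ta
  set d := Fin.last n
  set S : Matrix (Fin (n + 1)) (Fin (n + 1)) ℝ := fun i j => (a i j + a j i) / 2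
  set c : Fin (n + 1) → ℝ := fun k => -((a k d + a d k) / (2 * a d d))
  have hcoer : ∀ η, ν * ∑ i, η i ^ 2 ≤ η ⬝ᵥ a *ᵥ η := fun η =>
    sum_sum_mul_mul_eq_dotProduct_mulVec a η ▸ hell η
  have hdd : ν ≤ a d d := le_apply_self_of_coercive hcoer d
  have hdd0 : a d d ≠ 0 := (hν.trans_le hdd).ne'
  have hta : ta = shear d c * S * (shear d c)ᵀ := by
    ext k l
    exact (mul_mul_transpose_apply _ _ k l).symm
  refine ⟨?_, fun k hk => ⟨?_, ?_⟩, fun ξ => ?_⟩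
  · rw [hta, mul_shear_transpose_apply_self, shear_mul_apply_self]
    simp [S]
  · rw [hta, mul_shear_transpose_apply_of_ne _ _ _ _ hk, shear_mul_apply_self,
      shear_mul_apply_self]
    simp only [S, c]
    field_simp
    ring
  · rw [hta, mul_shear_transpose_apply_self, shear_mul_apply_of_ne _ _ _ hk]
    simp only [S, c]
    field_simp
    ring
  · have hQ : ∑ k, ∑ i, shear d (-c) k i ^ 2 ≤ (n + 1) ^ 2 * (1 + ν⁻¹ ^ 4) := by
      have := sum_sum_sq_shear_le d (-c) fun k => by
        simpa only [Pi.neg_apply, neg_neg, c, neg_sq] using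
          sq_div_two_mul_le hν (habs k d) (habs d k) hdd
      simpa only [Fintype.card_fin, Nat.cast_add, Nat.cast_one] using this
    rw [sum_sum_mul_mul_eq_dotProduct_mulVec ta ξ, hta]
    exact le_dotProduct_mul_mul_transpose_mulVec (shear_mul_shear_neg d c) hν.le (by positivity)
      hQ (fun η => (dotProduct_mulVec_symmetrize a η).symm ▸ hcoer η) ξ

/-- Properties of the transformed coefficients
`ã_{kl} = ∑_{ij} (a_{ij}+a_{ji})/2 ⬝ ∂y_k/∂x_i ⬝ ∂y_l/∂x_j`:
`ã_{dd} = a_{dd}`, `ã_{dl} = ã_{kd} = 0` for `k,l < d`, and uniform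
ellipticity with a constant `ν'` depending only on `ν` and `d`. -/
theorem stmt13 (n : ℕ) (hn : 1 ≤ n) (ν : ℝ) (hν : 0 < ν) :
    ∃ ν' : ℝ, 0 < ν' ∧
      ∀ a : Fin (n + 1) → Fin (n + 1) → ℝ,
        (∀ ξ : Fin (n + 1) → ℝ,
          ν * ∑ i, ξ i ^ 2 ≤ ∑ i, ∑ j, a i j * ξ i * ξ j) →
        (∀ i j, |a i j| ≤ ν⁻¹) →
        let P : Fin (n + 1) → Fin (n + 1) → ℝ := fun k i =>
          if k = i then 1
          else if i = Fin.last n then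
            -((a k (Fin.last n) + a (Fin.last n) k) /
              (2 * a (Fin.last n) (Fin.last n)))
          else 0
        let ta : Fin (n + 1) → Fin (n + 1) → ℝ := fun k l =>
          ∑ i, ∑ j, (a i j + a j i) / 2 * P k i * P l j
        ta (Fin.last n) (Fin.last n) = a (Fin.last n) (Fin.last n) ∧
        (∀ k, k ≠ Fin.last n → ta (Fin.last n) k = 0 ∧ ta k (Fin.last n) = 0) ∧
        ∀ ξ : Fin (n + 1) → ℝ,
          ν' * ∑ i, ξ i ^ 2 ≤ ∑ k, ∑ l, ta k l * ξ k * ξ l :=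
  stmt13_general n ν hν
end
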